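/- arXiv:2407.18833 — 2 statements merged into one kernel-verified Lean document; each statement's English description precedes it below -/
import Mathlib

section
/- (Theorem 1, (i)⇔(iii)) The observer candidate Σ̂ is a UIO for the system Σ if and only if its matrices satisfy the acceptor equations: (i) (I_n − Dy C) E + (A_UIO Dy − By) F = 0; (ii) Dy F = 0; (iii) A_UIO = (I_n − Dy C) A + (A_UIO Dy − By) C; (iv) Bu = (I_n − Dy C) B − By D; (v) Du = −Dy D, and in addition A_UIO is Schur stable. -/
open Matrix Filter

noncomputable section

/-- A real square matrix is Schur stable if all its complex eigenvalues
have modulus strictly less than 1. -/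
def SchurStable {n : ℕ} (M : Matrix (Fin n) (Fin n) ℝ) : Prop :=
  ∀ μ ∈ spectrum ℂ (M.map (algebraMap ℝ ℂ)), ‖μ‖ < 1

/-- `(x, u, y, d)` is a solution of the system `Σ`:
`x(t+1) = A x(t) + B u(t) + E d(t)`, `y(t) = C x(t) + D u(t) + F d(t)`. -/
def SigmaSol {n m p r : ℕ}
    (A : Matrix (Fin n) (Fin n) ℝ) (B : Matrix (Fin n) (Fin m) ℝ)
    (Cm : Matrix (Fin p) (Fin n) ℝ) (Dm : Matrix (Fin p) (Fin m) ℝ)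
    (E : Matrix (Fin n) (Fin r) ℝ) (F : Matrix (Fin p) (Fin r) ℝ)
    (x : ℕ → Fin n → ℝ) (u : ℕ → Fin m → ℝ) (y : ℕ → Fin p → ℝ)
    (d : ℕ → Fin r → ℝ) : Prop :=
  ∀ t : ℕ,
    x (t + 1) = A.mulVec (x t) + B.mulVec (u t) + E.mulVec (d t) ∧
    y t = Cm.mulVec (x t) + Dm.mulVec (u t) + F.mulVec (d t)

/-- `(x̂, u, y, z)` is a solution of the observer candidate `Σ̂`:
`z(t+1) = A_UIO z(t) + Bu u(t) + By y(t)`, `x̂(t) = z(t) + Du u(t) + Dy y(t)`. -/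
def ObsSol {n m p : ℕ}
    (Auio : Matrix (Fin n) (Fin n) ℝ) (Bu : Matrix (Fin n) (Fin m) ℝ)
    (By : Matrix (Fin n) (Fin p) ℝ) (Du : Matrix (Fin n) (Fin m) ℝ)
    (Dy : Matrix (Fin n) (Fin p) ℝ)
    (xh : ℕ → Fin n → ℝ) (u : ℕ → Fin m → ℝ) (y : ℕ → Fin p → ℝ)
    (z : ℕ → Fin n → ℝ) : Prop :=
  ∀ t : ℕ,
    z (t + 1) = Auio.mulVec (z t) + Bu.mulVec (u t) + By.mulVec (y t) ∧
    xh t = z t + Du.mulVec (u t) + Dy.mulVec (y t)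

/-- `Σ̂` is an acceptor for `Σ`: every solution of `Σ` can be tracked exactly. -/
def IsAcceptor {n m p r : ℕ}
    (A : Matrix (Fin n) (Fin n) ℝ) (B : Matrix (Fin n) (Fin m) ℝ)
    (Cm : Matrix (Fin p) (Fin n) ℝ) (Dm : Matrix (Fin p) (Fin m) ℝ)
    (E : Matrix (Fin n) (Fin r) ℝ) (F : Matrix (Fin p) (Fin r) ℝ)
    (Auio : Matrix (Fin n) (Fin n) ℝ) (Bu : Matrix (Fin n) (Fin m) ℝ)
    (By : Matrix (Fin n) (Fin p) ℝ) (Du : Matrix (Fin n) (Fin m) ℝ)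
    (Dy : Matrix (Fin n) (Fin p) ℝ) : Prop :=
  ∀ (x : ℕ → Fin n → ℝ) (u : ℕ → Fin m → ℝ) (y : ℕ → Fin p → ℝ)
    (d : ℕ → Fin r → ℝ), SigmaSol A B Cm Dm E F x u y d →
      ∃ z : ℕ → Fin n → ℝ, ObsSol Auio Bu By Du Dy x u y z

/-- `Σ̂` is an unknown-input observer (UIO) for `Σ`: it is an acceptor and
the estimation error tends to zero for all matching solutions. -/
def IsUIO {n m p r : ℕ}
    (A : Matrix (Fin n) (Fin n) ℝ) (B : Matrix (Fin n) (Fin m) ℝ)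
    (Cm : Matrix (Fin p) (Fin n) ℝ) (Dm : Matrix (Fin p) (Fin m) ℝ)
    (E : Matrix (Fin n) (Fin r) ℝ) (F : Matrix (Fin p) (Fin r) ℝ)
    (Auio : Matrix (Fin n) (Fin n) ℝ) (Bu : Matrix (Fin n) (Fin m) ℝ)
    (By : Matrix (Fin n) (Fin p) ℝ) (Du : Matrix (Fin n) (Fin m) ℝ)
    (Dy : Matrix (Fin n) (Fin p) ℝ) : Prop :=
  IsAcceptor A B Cm Dm E F Auio Bu By Du Dy ∧
  ∀ (x : ℕ → Fin n → ℝ) (u : ℕ → Fin m → ℝ) (y : ℕ → Fin p → ℝ)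
    (d : ℕ → Fin r → ℝ) (xh : ℕ → Fin n → ℝ) (z : ℕ → Fin n → ℝ),
      SigmaSol A B Cm Dm E F x u y d → ObsSol Auio Bu By Du Dy xh u y z →
      Tendsto (fun t => x t - xh t) atTop (nhds 0)

/-- Row index type of the data matrix `Φ_d = [X_p; X_f; U_p; U_f; Y_p; Y_f]`. -/
abbrev RowIdx (n m p : ℕ) := (Fin n ⊕ Fin n) ⊕ ((Fin m ⊕ Fin m) ⊕ (Fin p ⊕ Fin p))

/-- The data matrix `Φ_d = [X_p; X_f; U_p; U_f; Y_p; Y_f] ∈ ℝ^{2(n+m+p)×(T−1)}`. -/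
def PhiD {n m p : ℕ} (T : ℕ) (xd : ℕ → Fin n → ℝ) (ud : ℕ → Fin m → ℝ)
    (yd : ℕ → Fin p → ℝ) : Matrix (RowIdx n m p) (Fin (T - 1)) ℝ :=
  Matrix.of fun i j =>
    match i with
    | Sum.inl (Sum.inl a) => xd j.1 a
    | Sum.inl (Sum.inr a) => xd (j.1 + 1) a
    | Sum.inr (Sum.inl (Sum.inl a)) => ud j.1 a
    | Sum.inr (Sum.inl (Sum.inr a)) => ud (j.1 + 1) a
    | Sum.inr (Sum.inr (Sum.inl a)) => yd j.1 a
    | Sum.inr (Sum.inr (Sum.inr a)) => yd (j.1 + 1) a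

/-- The stacked vector `(x(t), x(t+1), u(t), u(t+1), y(t), y(t+1))`. -/
def stackVec {n m p : ℕ} (x : ℕ → Fin n → ℝ) (u : ℕ → Fin m → ℝ)
    (y : ℕ → Fin p → ℝ) (t : ℕ) : RowIdx n m p → ℝ :=
  fun i =>
    match i with
    | Sum.inl (Sum.inl a) => x t a
    | Sum.inl (Sum.inr a) => x (t + 1) a
    | Sum.inr (Sum.inl (Sum.inl a)) => u t a
    | Sum.inr (Sum.inl (Sum.inr a)) => u (t + 1) a
    | Sum.inr (Sum.inr (Sum.inl a)) => y t a
    | Sum.inr (Sum.inr (Sum.inr a)) => y (t + 1) a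

/-- The matrix `[X_p; U_p; U_f; D_p; D_f]` appearing in the Assumption. -/
def HistMat {n m r : ℕ} (T : ℕ) (xd : ℕ → Fin n → ℝ) (ud : ℕ → Fin m → ℝ)
    (dd : ℕ → Fin r → ℝ) :
    Matrix (Fin n ⊕ ((Fin m ⊕ Fin m) ⊕ (Fin r ⊕ Fin r))) (Fin (T - 1)) ℝ :=
  Matrix.of fun i j =>
    match i with
    | Sum.inl a => xd j.1 a
    | Sum.inr (Sum.inl (Sum.inl a)) => ud j.1 a
    | Sum.inr (Sum.inl (Sum.inr a)) => ud (j.1 + 1) a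
    | Sum.inr (Sum.inr (Sum.inl a)) => dd j.1 a
    | Sum.inr (Sum.inr (Sum.inr a)) => dd (j.1 + 1) a

/-!
The observer equation `x̂ = z + Du u + Dy y` forces `z = x - Du u - Dy y`, so `Σ̂` accepts `Σ`
exactly when this sequence obeys the observer recursion along every solution of `Σ`. Along a
solution, the defect of that recursion is linear in `x(t), u(t), u(t+1), d(t), d(t+1)`, which can
be prescribed freely; it therefore vanishes identically iff its five coefficient matrices vanish,
and these are the acceptor equations.

Two observer trajectories driven by the same `(u, y)` differ by a free response of `A_UIO`, and
every free response occurs as an estimation error (for the zero solution of `Σ`). Hence the error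
always tends to zero iff `A_UIO ^ t → 0`, which is Schur stability: one direction is Gelfand's
formula, the other holds because `μ ^ t` lies in the spectrum of `A_UIO ^ t`.
-/

open scoped NNReal Topology

section BanachAlgebra

variable {𝕜 A : Type*} [NormedField 𝕜] [NormedRing A] [NormedAlgebra 𝕜 A] [CompleteSpace A]

theorem spectrum.norm_lt_one_of_tendsto_pow {a : A}
    (h : Tendsto (fun k : ℕ => a ^ k) atTop (𝓝 0)) {μ : 𝕜} (hμ : μ ∈ spectrum 𝕜 a) :
    ‖μ‖ < 1 := by
  have hbound (k : ℕ) : ‖μ‖ ^ k ≤ ‖a ^ k‖ * ‖(1 : A)‖ := by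
    simpa using spectrum.norm_le_norm_mul_of_mem (spectrum.pow_mem_pow a k hμ)
  have hlim : Tendsto (fun k : ℕ => ‖a ^ k‖ * ‖(1 : A)‖) atTop (𝓝 0) := by
    simpa using (tendsto_zero_iff_norm_tendsto_zero.mp h).mul_const ‖(1 : A)‖
  obtain ⟨k, hk, -⟩ := ((hlim.eventually_lt_const one_pos).and (eventually_ge_atTop 1)).exists
  by_contra! hμ1
  exact (one_le_pow₀ hμ1).not_gt ((hbound k).trans_lt hk)

end BanachAlgebra

theorem tendsto_pow_atTop_nhds_zero_of_forall_mem_spectrum {A : Type*} [NormedRing A]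
    [NormedAlgebra ℂ A] [CompleteSpace A] (a : A) (h : ∀ μ ∈ spectrum ℂ a, ‖μ‖ < 1) :
    Tendsto (fun k : ℕ => a ^ k) atTop (𝓝 0) := by
  rcases subsingleton_or_nontrivial A with hA | hA
  · simp [Subsingleton.elim _ (0 : A)]
  have hρ : spectralRadius ℂ a < (1 : ℝ≥0) :=
    spectrum.spectralRadius_lt_of_forall_lt a fun μ hμ => by exact_mod_cast h μ hμ
  obtain ⟨c, hρc, hc⟩ := ENNReal.lt_iff_exists_nnreal_btwn.mp hρ
  have hc1 : (c : ℝ) < 1 := by exact_mod_cast hc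
  have hbound : ∀ᶠ k : ℕ in atTop, ‖a ^ k‖ ≤ (c : ℝ) ^ k := by
    filter_upwards [(spectrum.pow_nnnorm_pow_one_div_tendsto_nhds_spectralRadius a
      ).eventually_lt_const hρc, eventually_ne_atTop 0] with k hk hk0
    rw [one_div, ← ENNReal.coe_rpow_of_nonneg _ (by positivity), ENNReal.coe_lt_coe] at hk
    have hpow := pow_le_pow_left₀ (by positivity) hk.le k
    rw [NNReal.rpow_inv_natCast_pow _ hk0] at hpow
    exact_mod_cast hpow
  exact tendsto_zero_iff_norm_tendsto_zero.mpr <| squeeze_zero' (.of_forall fun _ => norm_nonneg _)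
    hbound (tendsto_pow_atTop_nhds_zero_of_lt_one c.coe_nonneg hc1)

theorem Matrix.tendsto_zero_iff_forall_tendsto_mulVec {α R m n : Type*} [Semiring R]
    [TopologicalSpace R] [IsTopologicalSemiring R] [Fintype n] [DecidableEq n] {l : Filter α}
    {f : α → Matrix m n R} :
    Tendsto f l (𝓝 0) ↔ ∀ v : n → R, Tendsto (fun a => f a *ᵥ v) l (𝓝 0) := by
  refine ⟨fun h v => ?_, fun h => tendsto_pi_nhds.mpr fun i => tendsto_pi_nhds.mpr fun j => ?_⟩
  · exact ((continuous_id.matrix_mulVec continuous_const).tendsto' 0 0 (zero_mulVec v)).comp h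
  · simpa using tendsto_pi_nhds.mp (h (Pi.single j 1)) i

theorem Matrix.tendsto_map_ofReal_iff {α m n : Type*} {l : Filter α} {f : α → Matrix m n ℝ} :
    Tendsto (fun a => (f a).map (algebraMap ℝ ℂ)) l (𝓝 0) ↔ Tendsto f l (𝓝 0) := by
  have h := (Complex.isometry_ofReal.isEmbedding.matrix_map (m := m) (n := n)).tendsto_nhds_iff
    (f := f) (l := l) (y := 0)
  rw [Matrix.map_zero _ Complex.ofReal_zero] at h
  exact h.symm

-- Any submultiplicative norm would do: the `L∞`-operator norm makes complex matrices a Banach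
-- algebra whose topology is the entrywise one.
open scoped Matrix.Norms.Operator in
theorem schurStable_iff_tendsto_pow {n : ℕ} (M : Matrix (Fin n) (Fin n) ℝ) :
    SchurStable M ↔ Tendsto (fun k : ℕ => M ^ k) atTop (𝓝 0) := by
  rw [← Matrix.tendsto_map_ofReal_iff]
  simp_rw [← RingHom.mapMatrix_apply, map_pow, RingHom.mapMatrix_apply]
  exact ⟨tendsto_pow_atTop_nhds_zero_of_forall_mem_spectrum _,
    fun h _ => spectrum.norm_lt_one_of_tendsto_pow h⟩

theorem exists_sigmaSol {n m p r : ℕ}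
    (A : Matrix (Fin n) (Fin n) ℝ) (B : Matrix (Fin n) (Fin m) ℝ)
    (Cm : Matrix (Fin p) (Fin n) ℝ) (Dm : Matrix (Fin p) (Fin m) ℝ)
    (E : Matrix (Fin n) (Fin r) ℝ) (F : Matrix (Fin p) (Fin r) ℝ)
    (x₀ : Fin n → ℝ) (u : ℕ → Fin m → ℝ) (d : ℕ → Fin r → ℝ) :
    ∃ x y, SigmaSol A B Cm Dm E F x u y d ∧ x 0 = x₀ := by
  let x : ℕ → Fin n → ℝ := fun t => Nat.rec x₀ (fun s xs => A *ᵥ xs + B *ᵥ u s + E *ᵥ d s) t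
  exact ⟨x, fun t => Cm *ᵥ x t + Dm *ᵥ u t + F *ᵥ d t, fun _ => ⟨rfl, rfl⟩, rfl⟩

def observerState {n m p : ℕ} (Du : Matrix (Fin n) (Fin m) ℝ) (Dy : Matrix (Fin n) (Fin p) ℝ)
    (x : ℕ → Fin n → ℝ) (u : ℕ → Fin m → ℝ) (y : ℕ → Fin p → ℝ) (t : ℕ) : Fin n → ℝ :=
  x t - Du *ᵥ u t - Dy *ᵥ y t

section Observer

variable {n m p r : ℕ}
  {A : Matrix (Fin n) (Fin n) ℝ} {B : Matrix (Fin n) (Fin m) ℝ}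
  {Cm : Matrix (Fin p) (Fin n) ℝ} {Dm : Matrix (Fin p) (Fin m) ℝ}
  {E : Matrix (Fin n) (Fin r) ℝ} {F : Matrix (Fin p) (Fin r) ℝ}
  {Auio : Matrix (Fin n) (Fin n) ℝ} {Bu : Matrix (Fin n) (Fin m) ℝ}
  {By : Matrix (Fin n) (Fin p) ℝ} {Du : Matrix (Fin n) (Fin m) ℝ}
  {Dy : Matrix (Fin n) (Fin p) ℝ}

theorem ObsSol.observerState_eq {xh u y z} (h : ObsSol Auio Bu By Du Dy xh u y z) :
    observerState Du Dy xh u y = z := by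
  funext t
  rw [observerState, (h t).2]
  abel

theorem isAcceptor_iff_observerState_succ :
    IsAcceptor A B Cm Dm E F Auio Bu By Du Dy ↔
      ∀ x u y d, SigmaSol A B Cm Dm E F x u y d → ∀ t,
        observerState Du Dy x u y (t + 1) =
          Auio *ᵥ observerState Du Dy x u y t + Bu *ᵥ u t + By *ᵥ y t := by
  refine ⟨fun hacc x u y d hsol t => ?_, fun h x u y d hsol => ?_⟩
  · obtain ⟨z, hz⟩ := hacc x u y d hsol
    rw [hz.observerState_eq]
    exact (hz t).1
  · exact ⟨_, fun t => ⟨h x u y d hsol t, by rw [observerState]; abel⟩⟩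

theorem SigmaSol.observerState_succ_sub {x u y d} (hsol : SigmaSol A B Cm Dm E F x u y d)
    (t : ℕ) :
    observerState Du Dy x u y (t + 1) -
        (Auio *ᵥ observerState Du Dy x u y t + Bu *ᵥ u t + By *ᵥ y t) =
      ((1 - Dy * Cm) * A + (Auio * Dy - By) * Cm - Auio) *ᵥ x t
        + ((1 - Dy * Cm) * B - By * Dm - Bu + Auio * (Du + Dy * Dm)) *ᵥ u t
        - (Du + Dy * Dm) *ᵥ u (t + 1)
        + ((1 - Dy * Cm) * E + (Auio * Dy - By) * F) *ᵥ d t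
        - (Dy * F) *ᵥ d (t + 1) := by
  obtain ⟨hx, hy⟩ := hsol t
  rw [observerState, observerState, (hsol (t + 1)).2, hx, hy]
  simp only [add_mulVec, sub_mulVec, mulVec_add, mulVec_sub, ← mulVec_mulVec, one_mulVec]
  abel

theorem isAcceptor_iff :
    IsAcceptor A B Cm Dm E F Auio Bu By Du Dy ↔
      ((1 - Dy * Cm) * E + (Auio * Dy - By) * F = 0 ∧
      Dy * F = 0 ∧
      Auio = (1 - Dy * Cm) * A + (Auio * Dy - By) * Cm ∧
      Bu = (1 - Dy * Cm) * B - By * Dm ∧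
      Du = -(Dy * Dm)) := by
  rw [isAcceptor_iff_observerState_succ]
  constructor
  · intro hacc
    have key (x₀ : Fin n → ℝ) (u : ℕ → Fin m → ℝ) (d : ℕ → Fin r → ℝ) :
        ((1 - Dy * Cm) * A + (Auio * Dy - By) * Cm - Auio) *ᵥ x₀
          + ((1 - Dy * Cm) * B - By * Dm - Bu + Auio * (Du + Dy * Dm)) *ᵥ u 0
          - (Du + Dy * Dm) *ᵥ u 1
          + ((1 - Dy * Cm) * E + (Auio * Dy - By) * F) *ᵥ d 0
          - (Dy * F) *ᵥ d 1 = 0 := by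
      obtain ⟨x, y, hsol, rfl⟩ := exists_sigmaSol A B Cm Dm E F x₀ u d
      rw [← hsol.observerState_succ_sub 0, hacc x u y d hsol 0, sub_self]
    have hfeed : Du + Dy * Dm = 0 := ext_iff_mulVec.2 fun v => by
      simpa using key 0 (Pi.single 1 v) 0
    refine ⟨ext_iff_mulVec.2 fun v => by simpa using key 0 0 (Pi.single 0 v),
      ext_iff_mulVec.2 fun v => by simpa using key 0 0 (Pi.single 1 v),
      (sub_eq_zero.1 <| ext_iff_mulVec.2 fun v => by simpa using key v 0 0).symm,
      (sub_eq_zero.1 <| ext_iff_mulVec.2 fun v => by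
        simpa [hfeed] using key 0 (Pi.single 0 v) 0).symm,
      eq_neg_of_add_eq_zero_left hfeed⟩
  · rintro ⟨hE, hF, hA, hB, hD⟩ x u y d hsol t
    rw [← sub_eq_zero, hsol.observerState_succ_sub, hE, hF, ← hA, ← hB, hD]
    simp

theorem ObsSol.sub_succ {xh xh' u y z z'} (h : ObsSol Auio Bu By Du Dy xh u y z)
    (h' : ObsSol Auio Bu By Du Dy xh' u y z') (t : ℕ) :
    xh (t + 1) - xh' (t + 1) = Auio *ᵥ (xh t - xh' t) := by
  rw [(h _).2, (h' _).2, (h t).1, (h' t).1, (h t).2, (h' t).2]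
  simp only [mulVec_add, mulVec_sub]
  abel

theorem ObsSol.sub_eq_pow_mulVec {xh xh' u y z z'} (h : ObsSol Auio Bu By Du Dy xh u y z)
    (h' : ObsSol Auio Bu By Du Dy xh' u y z') (t : ℕ) :
    xh t - xh' t = (Auio ^ t) *ᵥ (xh 0 - xh' 0) := by
  induction t with
  | zero => simp
  | succ t ih => rw [h.sub_succ h' t, ih, mulVec_mulVec, ← pow_succ']

theorem obsSol_free_response (v : Fin n → ℝ) :
    ObsSol Auio Bu By Du Dy (fun t => (Auio ^ t) *ᵥ v) 0 0 (fun t => (Auio ^ t) *ᵥ v) :=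
  fun t => ⟨by simp [mulVec_mulVec, pow_succ'], by simp⟩

theorem sigmaSol_zero : SigmaSol A B Cm Dm E F 0 0 0 0 := fun _ => by simp

theorem isUIO_iff_isAcceptor_and_schurStable :
    IsUIO A B Cm Dm E F Auio Bu By Du Dy ↔
      IsAcceptor A B Cm Dm E F Auio Bu By Du Dy ∧ SchurStable Auio := by
  refine and_congr_right fun hacc => ?_
  rw [schurStable_iff_tendsto_pow, Matrix.tendsto_zero_iff_forall_tendsto_mulVec]
  refine ⟨fun herr v => ?_, fun hpow x u y d xh z hsol hobs => ?_⟩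
  · simpa using (herr _ _ _ _ _ _ sigmaSol_zero (obsSol_free_response v)).neg
  · obtain ⟨z', hz'⟩ := hacc x u y d hsol
    rw [funext (hz'.sub_eq_pow_mulVec hobs)]
    exact hpow _

end Observer

theorem theorem1_i_iff_iii_general {n m p r : ℕ}
    (A : Matrix (Fin n) (Fin n) ℝ) (B : Matrix (Fin n) (Fin m) ℝ)
    (Cm : Matrix (Fin p) (Fin n) ℝ) (Dm : Matrix (Fin p) (Fin m) ℝ)
    (E : Matrix (Fin n) (Fin r) ℝ) (F : Matrix (Fin p) (Fin r) ℝ)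
    (Auio : Matrix (Fin n) (Fin n) ℝ) (Bu : Matrix (Fin n) (Fin m) ℝ)
    (By : Matrix (Fin n) (Fin p) ℝ) (Du : Matrix (Fin n) (Fin m) ℝ)
    (Dy : Matrix (Fin n) (Fin p) ℝ) :
    IsUIO A B Cm Dm E F Auio Bu By Du Dy ↔
      (((1 - Dy * Cm) * E + (Auio * Dy - By) * F = 0 ∧
      Dy * F = 0 ∧
      Auio = (1 - Dy * Cm) * A + (Auio * Dy - By) * Cm ∧
      Bu = (1 - Dy * Cm) * B - By * Dm ∧
      Du = -(Dy * Dm)) ∧ SchurStable Auio) := by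
  rw [isUIO_iff_isAcceptor_and_schurStable, isAcceptor_iff]

theorem theorem1_i_iff_iii {n m p r : ℕ} (hn : 0 < n) (hm : 0 < m) (hp : 0 < p) (hr : 0 < r)
    (A : Matrix (Fin n) (Fin n) ℝ) (B : Matrix (Fin n) (Fin m) ℝ)
    (Cm : Matrix (Fin p) (Fin n) ℝ) (Dm : Matrix (Fin p) (Fin m) ℝ)
    (E : Matrix (Fin n) (Fin r) ℝ) (F : Matrix (Fin p) (Fin r) ℝ)
    (hEF : (Matrix.fromRows E F).rank = r)
    (Auio : Matrix (Fin n) (Fin n) ℝ) (Bu : Matrix (Fin n) (Fin m) ℝ)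
    (By : Matrix (Fin n) (Fin p) ℝ) (Du : Matrix (Fin n) (Fin m) ℝ)
    (Dy : Matrix (Fin n) (Fin p) ℝ) :
    IsUIO A B Cm Dm E F Auio Bu By Du Dy ↔
      (((1 - Dy * Cm) * E + (Auio * Dy - By) * F = 0 ∧
      Dy * F = 0 ∧
      Auio = (1 - Dy * Cm) * A + (Auio * Dy - By) * Cm ∧
      Bu = (1 - Dy * Cm) * B - By * Dm ∧
      Du = -(Dy * Dm)) ∧ SchurStable Auio) :=
  theorem1_i_iff_iii_general A B Cm Dm E F Auio Bu By Du Dy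
end
end

section
/- (Theorem 3, 'only if' direction) Suppose the historical data are generated by Σ, and suppose the observer candidate Σ̂ with matrices A_UIO, Bu, By, Du, Dy is a UIO for Σ. Then for every integer q and every matrix Ψ = [V_p V_f W_p W_f R_p R_f] ∈ ℝ^{q×2(n+m+p)} (with blocks V_p, V_f ∈ ℝ^{q×n}, W_p, W_f ∈ ℝ^{q×m}, R_p, R_f ∈ ℝ^{q×p}) whose kernel equals the column space of Φ_d, there exists a matrix Ω ∈ ℝ^{n×q} such that Ω V_p = −A_UIO and Ω V_f = I_n, where A_UIO is Schur stable. -/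
open Matrix Filter

noncomputable section

/-!
Stability: the zero solution of `Σ` is tracked by every observer trajectory
`z(t) = A_UIOᵗ z₀`, so the UIO property forces `A_UIOᵗ → 0`, and an eigenvector of `A_UIO`
then shows that each eigenvalue `μ` satisfies `μᵗ → 0`.

Data equation: substituting `z = x - Du u - Dy y` into the observer dynamics gives the row
relation `Θ (x(t), x(t+1), u(t), u(t+1), y(t), y(t+1)) = 0` with
`Θ = [-A_UIO, I, A_UIO Du - Bu, -Du, A_UIO Dy - By, -Dy]` along every solution of `Σ`. The data
extend to a solution of `Σ`, which the acceptor tracks exactly, so `Θ Φ_d = 0`. Hence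
`ker Ψ = im Φ_d ⊆ ker Θ`, so `Θ = Ω Ψ` for some `Ω`, and the first two blocks of this identity
are the claim.
-/

open Topology

theorem LinearMap.exists_comp_eq_of_ker_le {K V W U : Type*} [Field K]
    [AddCommGroup V] [AddCommGroup W] [AddCommGroup U] [Module K V] [Module K W] [Module K U]
    {f : V →ₗ[K] W} {g : V →ₗ[K] U} (h : LinearMap.ker f ≤ LinearMap.ker g) :
    ∃ g' : W →ₗ[K] U, g' ∘ₗ f = g := by
  obtain ⟨g', hg'⟩ := LinearMap.exists_extend
    ((LinearMap.ker f).liftQ g h ∘ₗ f.quotKerEquivRange.symm.toLinearMap)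
  refine ⟨g', LinearMap.ext fun v => ?_⟩
  simpa [LinearMap.quotKerEquivRange_symm_apply_image] using
    LinearMap.congr_fun hg' ⟨f v, LinearMap.mem_range_self f v⟩

namespace Matrix

theorem exists_mul_eq_of_mulVec_eq_zero {K ι κ l : Type*} [Field K] [Fintype ι] [DecidableEq ι]
    [Fintype κ] [DecidableEq κ] (Ψ : Matrix ι κ K) (Θ : Matrix l κ K)
    (h : ∀ v, Ψ *ᵥ v = 0 → Θ *ᵥ v = 0) : ∃ Ω : Matrix l ι K, Ω * Ψ = Θ := by
  obtain ⟨g, hg⟩ := LinearMap.exists_comp_eq_of_ker_le (f := toLin' Ψ) (g := toLin' Θ)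
    fun v hv => h v hv
  refine ⟨LinearMap.toMatrix' g, ?_⟩
  rw [← LinearMap.toMatrix'_toLin' Ψ, ← LinearMap.toMatrix'_comp, hg,
    LinearMap.toMatrix'_toLin']

theorem tendsto_zero_of_tendsto_mulVec {α m n R : Type*} [Fintype n] [DecidableEq n]
    [NonAssocSemiring R] [TopologicalSpace R] {l : Filter α} {f : α → Matrix m n R}
    (h : ∀ v, Tendsto (fun a => f a *ᵥ v) l (𝓝 0)) : Tendsto f l (𝓝 0) :=
  tendsto_pi_nhds.2 fun i => tendsto_pi_nhds.2 fun j => by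
    simpa [mulVec_single_one] using tendsto_pi_nhds.1 (h (Pi.single j 1)) i

theorem norm_lt_one_of_mem_spectrum_of_tendsto_pow {n : Type*} [Fintype n] [DecidableEq n]
    {N : Matrix n n ℂ} (hN : Tendsto (fun t : ℕ => N ^ t) atTop (𝓝 0)) {μ : ℂ}
    (hμ : μ ∈ spectrum ℂ N) : ‖μ‖ < 1 := by
  rw [← spectrum_toLin', ← Module.End.hasEigenvalue_iff_mem_spectrum] at hμ
  obtain ⟨v, hv⟩ := hμ.exists_hasEigenvector
  have hpow : ∀ t : ℕ, N ^ t *ᵥ v = μ ^ t • v := fun t => by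
    rw [← toLin'_apply, toLin'_pow, hv.pow_apply]
  have hlim : Tendsto (fun t : ℕ => μ ^ t • v) atTop (𝓝 0) := by
    simpa [Function.comp_def, hpow] using
      ((continuous_id.matrix_mulVec (continuous_const (y := v))).tendsto 0).comp hN
  obtain ⟨i, hi⟩ := Function.ne_iff.1 hv.2
  have hcoord : Tendsto (fun t : ℕ => μ ^ t * v i * (v i)⁻¹) atTop (𝓝 0) := by
    simpa using (tendsto_pi_nhds.1 hlim i).mul_const (v i)⁻¹
  exact tendsto_pow_atTop_nhds_zero_iff_norm_lt_one.1 <| by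
    simpa [mul_inv_cancel_right₀ hi] using hcoord

end Matrix

theorem schurStable_of_tendsto_pow {n : ℕ} {M : Matrix (Fin n) (Fin n) ℝ}
    (hM : Tendsto (fun t : ℕ => M ^ t) atTop (𝓝 0)) : SchurStable M := by
  intro μ hμ
  have hMc := ((continuous_id.matrix_map (continuous_algebraMap ℝ ℂ)).tendsto 0).comp hM
  simp only [Function.comp_def, id_eq, Matrix.map_zero _ (map_zero _), Matrix.map_pow] at hMc
  exact Matrix.norm_lt_one_of_mem_spectrum_of_tendsto_pow hMc hμ

section Observer

variable {n m p r : ℕ}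
    {A : Matrix (Fin n) (Fin n) ℝ} {B : Matrix (Fin n) (Fin m) ℝ}
    {Cm : Matrix (Fin p) (Fin n) ℝ} {Dm : Matrix (Fin p) (Fin m) ℝ}
    {E : Matrix (Fin n) (Fin r) ℝ} {F : Matrix (Fin p) (Fin r) ℝ}
    {Auio : Matrix (Fin n) (Fin n) ℝ} {Bu : Matrix (Fin n) (Fin m) ℝ}
    {By : Matrix (Fin n) (Fin p) ℝ} {Du : Matrix (Fin n) (Fin m) ℝ}
    {Dy : Matrix (Fin n) (Fin p) ℝ}

theorem IsUIO.tendsto_pow_mulVec (huio : IsUIO A B Cm Dm E F Auio Bu By Du Dy)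
    (z₀ : Fin n → ℝ) : Tendsto (fun t : ℕ => Auio ^ t *ᵥ z₀) atTop (𝓝 0) := by
  have hzero : SigmaSol A B Cm Dm E F 0 0 0 0 := fun _ => by simp
  have hobs : ObsSol Auio Bu By Du Dy (fun t => Auio ^ t *ᵥ z₀) 0 0
      (fun t => Auio ^ t *ᵥ z₀) := fun t => by simp [pow_succ', mulVec_mulVec]
  simpa using (huio.2 _ _ _ _ _ _ hzero hobs).neg

def stateTraj (A : Matrix (Fin n) (Fin n) ℝ) (B : Matrix (Fin n) (Fin m) ℝ)
    (E : Matrix (Fin n) (Fin r) ℝ) (x₀ : Fin n → ℝ) (u : ℕ → Fin m → ℝ) (d : ℕ → Fin r → ℝ) :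
    ℕ → Fin n → ℝ
  | 0 => x₀
  | t + 1 => A *ᵥ stateTraj A B E x₀ u d t + B *ᵥ u t + E *ᵥ d t

theorem exists_sigmaSol_extending {T : ℕ} {xd : ℕ → Fin n → ℝ} {ud : ℕ → Fin m → ℝ}
    {yd : ℕ → Fin p → ℝ} {dd : ℕ → Fin r → ℝ}
    (hgen1 : ∀ t : ℕ, t + 2 ≤ T → xd (t + 1) = A *ᵥ xd t + B *ᵥ ud t + E *ᵥ dd t)
    (hgen2 : ∀ t : ℕ, t + 1 ≤ T → yd t = Cm *ᵥ xd t + Dm *ᵥ ud t + F *ᵥ dd t) :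
    ∃ x y, SigmaSol A B Cm Dm E F x ud y dd ∧ ∀ t, t + 1 ≤ T → x t = xd t ∧ y t = yd t := by
  set x := stateTraj A B E (xd 0) ud dd
  have hx : ∀ t, t + 1 ≤ T → x t = xd t := by
    intro t ht
    induction t with
    | zero => rfl
    | succ t ih => rw [hgen1 t ht, ← ih (by omega)]; rfl
  refine ⟨x, fun t => Cm *ᵥ x t + Dm *ᵥ ud t + F *ᵥ dd t, fun t => ⟨rfl, rfl⟩,
    fun t ht => ⟨hx t ht, by simp only [hgen2 t ht, hx t ht]⟩⟩

def obsAnnihilator (Auio : Matrix (Fin n) (Fin n) ℝ) (Bu : Matrix (Fin n) (Fin m) ℝ)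
    (By : Matrix (Fin n) (Fin p) ℝ) (Du : Matrix (Fin n) (Fin m) ℝ)
    (Dy : Matrix (Fin n) (Fin p) ℝ) : Matrix (Fin n) (RowIdx n m p) ℝ :=
  fromCols (fromCols (-Auio) 1)
    (fromCols (fromCols (Auio * Du - Bu) (-Du)) (fromCols (Auio * Dy - By) (-Dy)))

theorem stackVec_eq_sumElim (x : ℕ → Fin n → ℝ) (u : ℕ → Fin m → ℝ) (y : ℕ → Fin p → ℝ)
    (t : ℕ) : stackVec x u y t = Sum.elim (Sum.elim (x t) (x (t + 1)))
      (Sum.elim (Sum.elim (u t) (u (t + 1))) (Sum.elim (y t) (y (t + 1)))) := by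
  funext k
  rcases k with (a | a) | ((a | a) | (a | a)) <;> rfl

theorem ObsSol.obsAnnihilator_mulVec_stackVec {x : ℕ → Fin n → ℝ} {u : ℕ → Fin m → ℝ}
    {y : ℕ → Fin p → ℝ} {z : ℕ → Fin n → ℝ} (h : ObsSol Auio Bu By Du Dy x u y z) (t : ℕ) :
    obsAnnihilator Auio Bu By Du Dy *ᵥ stackVec x u y t = 0 := by
  rw [stackVec_eq_sumElim, obsAnnihilator]
  simp only [fromCols_mulVec_sumElim]
  rw [(h t).2, (h (t + 1)).2, (h t).1]
  simp only [neg_mulVec, sub_mulVec, mulVec_add, one_mulVec, ← mulVec_mulVec]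
  abel

theorem IsAcceptor.obsAnnihilator_mul_phiD (hacc : IsAcceptor A B Cm Dm E F Auio Bu By Du Dy)
    {T : ℕ} {xd : ℕ → Fin n → ℝ} {ud : ℕ → Fin m → ℝ} {yd : ℕ → Fin p → ℝ}
    {dd : ℕ → Fin r → ℝ}
    (hgen1 : ∀ t : ℕ, t + 2 ≤ T → xd (t + 1) = A *ᵥ xd t + B *ᵥ ud t + E *ᵥ dd t)
    (hgen2 : ∀ t : ℕ, t + 1 ≤ T → yd t = Cm *ᵥ xd t + Dm *ᵥ ud t + F *ᵥ dd t) :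
    obsAnnihilator Auio Bu By Du Dy * PhiD T xd ud yd = 0 := by
  obtain ⟨x, y, hsol, hagree⟩ := exists_sigmaSol_extending hgen1 hgen2
  obtain ⟨z, hz⟩ := hacc x ud y dd hsol
  ext i j
  have hcol : (fun k => PhiD T xd ud yd k j) = stackVec x ud y j := by
    obtain ⟨hx₀, hy₀⟩ := hagree j (by omega)
    obtain ⟨hx₁, hy₁⟩ := hagree (j + 1) (by omega)
    funext k
    rcases k with (a | a) | ((a | a) | (a | a)) <;> simp [PhiD, stackVec, hx₀, hy₀, hx₁, hy₁]
  exact congrFun (hcol ▸ hz.obsAnnihilator_mulVec_stackVec j) i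

end Observer

theorem theorem3_only_if_general {n m p r : ℕ}
    (A : Matrix (Fin n) (Fin n) ℝ) (B : Matrix (Fin n) (Fin m) ℝ)
    (Cm : Matrix (Fin p) (Fin n) ℝ) (Dm : Matrix (Fin p) (Fin m) ℝ)
    (E : Matrix (Fin n) (Fin r) ℝ) (F : Matrix (Fin p) (Fin r) ℝ)
    (Auio : Matrix (Fin n) (Fin n) ℝ) (Bu : Matrix (Fin n) (Fin m) ℝ)
    (By : Matrix (Fin n) (Fin p) ℝ) (Du : Matrix (Fin n) (Fin m) ℝ)
    (Dy : Matrix (Fin n) (Fin p) ℝ)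
    (T : ℕ)
    (xd : ℕ → Fin n → ℝ) (ud : ℕ → Fin m → ℝ) (yd : ℕ → Fin p → ℝ)
    (dd : ℕ → Fin r → ℝ)
    (hgen1 : ∀ t : ℕ, t + 2 ≤ T →
      xd (t + 1) = A.mulVec (xd t) + B.mulVec (ud t) + E.mulVec (dd t))
    (hgen2 : ∀ t : ℕ, t + 1 ≤ T →
      yd t = Cm.mulVec (xd t) + Dm.mulVec (ud t) + F.mulVec (dd t))
    (huio : IsUIO A B Cm Dm E F Auio Bu By Du Dy) :
    SchurStable Auio ∧
      ∀ (q : ℕ) (Ψ : Matrix (Fin q) (RowIdx n m p) ℝ),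
        (∀ v : RowIdx n m p → ℝ, Ψ.mulVec v = 0 ↔
          ∃ c : Fin (T - 1) → ℝ, v = (PhiD T xd ud yd).mulVec c) →
        ∃ Ω : Matrix (Fin n) (Fin q) ℝ,
          Ω * Matrix.of (fun i j => Ψ i (Sum.inl (Sum.inl j))) = -Auio ∧
          Ω * Matrix.of (fun i j => Ψ i (Sum.inl (Sum.inr j))) = 1 := by
  refine ⟨schurStable_of_tendsto_pow
    (Matrix.tendsto_zero_of_tendsto_mulVec huio.tendsto_pow_mulVec), fun q Ψ hker => ?_⟩
  obtain ⟨Ω, hΩ⟩ := Matrix.exists_mul_eq_of_mulVec_eq_zero Ψ (obsAnnihilator Auio Bu By Du Dy)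
    fun v hv => by
      obtain ⟨c, rfl⟩ := (hker v).1 hv
      rw [mulVec_mulVec, huio.1.obsAnnihilator_mul_phiD hgen1 hgen2, zero_mulVec]
  have hblock : ∀ f : Fin n → RowIdx n m p,
      Ω * Ψ.submatrix id f = (obsAnnihilator Auio Bu By Du Dy).submatrix id f := fun f => by
    rw [← hΩ, submatrix_mul _ _ id id f Function.bijective_id, submatrix_id_id]
  exact ⟨Ω, (hblock (Sum.inl ∘ Sum.inl)).trans (by ext; simp [obsAnnihilator]),
    (hblock (Sum.inl ∘ Sum.inr)).trans (by ext; simp [obsAnnihilator])⟩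

theorem theorem3_only_if {n m p r : ℕ} (hn : 0 < n) (hm : 0 < m) (hp : 0 < p) (hr : 0 < r)
    (A : Matrix (Fin n) (Fin n) ℝ) (B : Matrix (Fin n) (Fin m) ℝ)
    (Cm : Matrix (Fin p) (Fin n) ℝ) (Dm : Matrix (Fin p) (Fin m) ℝ)
    (E : Matrix (Fin n) (Fin r) ℝ) (F : Matrix (Fin p) (Fin r) ℝ)
    (hEF : (Matrix.fromRows E F).rank = r)
    (Auio : Matrix (Fin n) (Fin n) ℝ) (Bu : Matrix (Fin n) (Fin m) ℝ)
    (By : Matrix (Fin n) (Fin p) ℝ) (Du : Matrix (Fin n) (Fin m) ℝ)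
    (Dy : Matrix (Fin n) (Fin p) ℝ)
    (T : ℕ) (hT : 2 ≤ T)
    (xd : ℕ → Fin n → ℝ) (ud : ℕ → Fin m → ℝ) (yd : ℕ → Fin p → ℝ)
    (dd : ℕ → Fin r → ℝ)
    (hgen1 : ∀ t : ℕ, t + 2 ≤ T →
      xd (t + 1) = A.mulVec (xd t) + B.mulVec (ud t) + E.mulVec (dd t))
    (hgen2 : ∀ t : ℕ, t + 1 ≤ T →
      yd t = Cm.mulVec (xd t) + Dm.mulVec (ud t) + F.mulVec (dd t))
    (huio : IsUIO A B Cm Dm E F Auio Bu By Du Dy) :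
    SchurStable Auio ∧
      ∀ (q : ℕ) (Ψ : Matrix (Fin q) (RowIdx n m p) ℝ),
        (∀ v : RowIdx n m p → ℝ, Ψ.mulVec v = 0 ↔
          ∃ c : Fin (T - 1) → ℝ, v = (PhiD T xd ud yd).mulVec c) →
        ∃ Ω : Matrix (Fin n) (Fin q) ℝ,
          Ω * Matrix.of (fun i j => Ψ i (Sum.inl (Sum.inl j))) = -Auio ∧
          Ω * Matrix.of (fun i j => Ψ i (Sum.inl (Sum.inr j))) = 1 :=
  theorem3_only_if_general A B Cm Dm E F Auio Bu By Du Dy T xd ud yd dd hgen1 hgen2 huio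
end
end
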